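/- Let 1 ≤ p ≤ q < ∞. For all sequences x, y with ‖x‖_{wℓ^p_q} < ∞ and ‖y‖_{wℓ^p_q} < ∞, the quasi-triangle inequality ‖x + y‖_{wℓ^p_q} ≤ 2(‖x‖_{wℓ^p_q} + ‖y‖_{wℓ^p_q}) holds; moreover ‖αx‖_{wℓ^p_q} = |α| ‖x‖_{wℓ^p_q} for every scalar α, and ‖x‖_{wℓ^p_q} = 0 if and only if x = 0. Hence ‖·‖_{wℓ^p_q} is a quasi-norm on wℓ^p_q. -/

import Mathlib

/-!
Each quantity in the supremum only involves the counting function `weakCard`. If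
`|x_k + y_k| > γ` then `|x_k| > γ/2` or `|y_k| > γ/2`, so the count for `x + y` at level `γ`
is at most the sum of the counts for `x` and `y` at level `γ/2`; since `1/p ≤ 1`, the map
`t ↦ t^{1/p}` is subadditive, and the factor `γ = 2 (γ/2)` produces the constant `2`.
Scaling `x` by `α` rescales the levels by `|α|`, and a nonzero entry `x_k` is already seen
by the single-point window `S_{k,0}` at level `|x_k|/2`.
-/

open scoped ENNReal NNReal BigOperators

/-- The discrete "ball" `S_{m,N} = {m-N, …, m+N}` as a finite set of integers. -/
noncomputable def S (m : ℤ) (N : ℕ) : Finset ℤ := Finset.Icc (m - N) (m + N)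

open Classical in
/-- The cardinality of `{k ∈ S_{m,N} : |x_k| > γ}`. -/
noncomputable def weakCard (x : ℤ → ℂ) (m : ℤ) (N : ℕ) (γ : ℝ≥0) : ℕ :=
  ((S m N).filter (fun k => γ < ‖x k‖₊)).card

/-- The weak type discrete Morrey norm `‖x‖_{wℓ^p_q}`. -/
noncomputable def wMorreyNorm (p q : ℝ) (x : ℤ → ℂ) : ℝ≥0∞ :=
  ⨆ (m : ℤ) (N : ℕ) (γ : ℝ≥0) (_ : 0 < γ),
    (2 * (N : ℝ≥0∞) + 1) ^ (1 / q - 1 / p) * (γ : ℝ≥0∞) *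
      (weakCard x m N γ : ℝ≥0∞) ^ (1 / p)

noncomputable def wMorreyTerm (p q : ℝ) (x : ℤ → ℂ) (m : ℤ) (N : ℕ) (γ : ℝ≥0) : ℝ≥0∞ :=
  (2 * (N : ℝ≥0∞) + 1) ^ (1 / q - 1 / p) * (γ : ℝ≥0∞) *
    (weakCard x m N γ : ℝ≥0∞) ^ (1 / p)

section

variable {p q : ℝ} {x y : ℤ → ℂ}

lemma wMorreyTerm_le_wMorreyNorm (x : ℤ → ℂ) (m : ℤ) (N : ℕ) {γ : ℝ≥0} (hγ : 0 < γ) :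
    wMorreyTerm p q x m N γ ≤ wMorreyNorm p q x :=
  le_iSup_of_le m <| le_iSup_of_le N <| le_iSup_of_le γ <| le_iSup_of_le hγ le_rfl

lemma wMorreyNorm_le {L : ℝ≥0∞} (h : ∀ m N γ, 0 < γ → wMorreyTerm p q x m N γ ≤ L) :
    wMorreyNorm p q x ≤ L :=
  iSup_le fun m => iSup_le fun N => iSup_le fun γ => iSup_le fun hγ => h m N γ hγ

lemma weakCard_zero (m : ℤ) (N : ℕ) (γ : ℝ≥0) : weakCard 0 m N γ = 0 := by
  simp [weakCard]

lemma wMorreyNorm_zero (hp : 0 < p) : wMorreyNorm p q 0 = 0 := by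
  refine le_antisymm (wMorreyNorm_le fun m N γ _ => ?_) bot_le
  simp [wMorreyTerm, weakCard_zero, hp]

lemma weakCard_add_le (m : ℤ) (N : ℕ) (a b : ℝ≥0) :
    weakCard (x + y) m N (a + b) ≤ weakCard x m N a + weakCard y m N b := by
  classical
  refine (Finset.card_le_card fun k hk => ?_).trans (Finset.card_union_le _ _)
  simp only [Finset.mem_filter, Finset.mem_union] at hk ⊢
  by_contra! hsmall
  have : ‖x k + y k‖₊ ≤ a + b :=
    (nnnorm_add_le _ _).trans (add_le_add (hsmall.1 hk.1) (hsmall.2 hk.1))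
  exact this.not_gt hk.2

lemma wMorreyNorm_add_le (hp : 1 ≤ p) :
    wMorreyNorm p q (x + y) ≤ 2 * (wMorreyNorm p q x + wMorreyNorm p q y) := by
  have hp0 : 0 ≤ 1 / p := by positivity
  have hp1 : 1 / p ≤ 1 := (div_le_one (by linarith)).2 hp
  refine wMorreyNorm_le fun m N γ hγ => ?_
  set δ : ℝ≥0 := γ / 2
  set C : ℝ≥0∞ := (2 * (N : ℝ≥0∞) + 1) ^ (1 / q - 1 / p)
  have hγδ : (γ : ℝ≥0∞) = 2 * δ := by
    rw [← ENNReal.coe_ofNat, ← ENNReal.coe_mul, mul_div_cancel₀ _ two_ne_zero]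
  have hcard : weakCard (x + y) m N γ ≤ weakCard x m N δ + weakCard y m N δ := by
    simpa only [δ, add_halves] using weakCard_add_le (x := x) (y := y) m N δ δ
  calc wMorreyTerm p q (x + y) m N γ
      ≤ C * γ * ((weakCard x m N δ + weakCard y m N δ : ℕ) : ℝ≥0∞) ^ (1 / p) := by
        rw [wMorreyTerm]
        gcongr
    _ ≤ C * γ * ((weakCard x m N δ : ℝ≥0∞) ^ (1 / p) + (weakCard y m N δ : ℝ≥0∞) ^ (1 / p)) := by
        push_cast
        gcongr
        exact ENNReal.rpow_add_le_add_rpow _ _ hp0 hp1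
    _ = 2 * (wMorreyTerm p q x m N δ + wMorreyTerm p q y m N δ) := by
        rw [hγδ, wMorreyTerm, wMorreyTerm]; ring
    _ ≤ 2 * (wMorreyNorm p q x + wMorreyNorm p q y) := by
        have hδ : 0 < δ := by positivity
        gcongr <;> exact wMorreyTerm_le_wMorreyNorm _ m N hδ

lemma weakCard_smul {α : ℂ} (hα : α ≠ 0) (x : ℤ → ℂ) (m : ℤ) (N : ℕ) (γ : ℝ≥0) :
    weakCard (α • x) m N γ = weakCard x m N (γ / ‖α‖₊) := by
  unfold weakCard
  congr 1
  refine Finset.filter_congr fun k _ => ?_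
  rw [Pi.smul_apply, smul_eq_mul, nnnorm_mul, div_lt_iff₀' (nnnorm_pos.2 hα)]

lemma wMorreyNorm_smul_le (hp : 0 < p) (α : ℂ) (x : ℤ → ℂ) :
    wMorreyNorm p q (α • x) ≤ ‖α‖₊ * wMorreyNorm p q x := by
  rcases eq_or_ne α 0 with rfl | hα
  · simp [wMorreyNorm_zero hp]
  refine wMorreyNorm_le fun m N γ hγ => ?_
  have hγα : (γ : ℝ≥0∞) = ‖α‖₊ * ↑(γ / ‖α‖₊) := by
    rw [← ENNReal.coe_mul, mul_div_cancel₀ _ (nnnorm_ne_zero_iff.2 hα)]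
  calc wMorreyTerm p q (α • x) m N γ = ‖α‖₊ * wMorreyTerm p q x m N (γ / ‖α‖₊) := by
        rw [wMorreyTerm, wMorreyTerm, weakCard_smul hα, hγα]; ring
    _ ≤ ‖α‖₊ * wMorreyNorm p q x := by
        gcongr
        exact wMorreyTerm_le_wMorreyNorm x m N (div_pos hγ (nnnorm_pos.2 hα))

lemma wMorreyNorm_smul (hp : 0 < p) (α : ℂ) (x : ℤ → ℂ) :
    wMorreyNorm p q (α • x) = ‖α‖₊ * wMorreyNorm p q x := by
  rcases eq_or_ne α 0 with rfl | hα
  · simp [wMorreyNorm_zero hp]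
  refine le_antisymm (wMorreyNorm_smul_le hp α x) ?_
  calc (‖α‖₊ : ℝ≥0∞) * wMorreyNorm p q x
      = ‖α‖₊ * wMorreyNorm p q (α⁻¹ • α • x) := by rw [inv_smul_smul₀ hα]
    _ ≤ ‖α‖₊ * (‖α⁻¹‖₊ * wMorreyNorm p q (α • x)) := by
        gcongr
        exact wMorreyNorm_smul_le hp _ _
    _ = wMorreyNorm p q (α • x) := by
        rw [← mul_assoc, ← ENNReal.coe_mul, ← nnnorm_mul, mul_inv_cancel₀ hα]; simp

lemma one_le_weakCard_of_lt {m : ℤ} {γ : ℝ≥0} (hm : γ < ‖x m‖₊) (N : ℕ) :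
    1 ≤ weakCard x m N γ :=
  Finset.card_pos.2 ⟨m, Finset.mem_filter.2 ⟨by simp [S], hm⟩⟩

lemma wMorreyNorm_eq_zero_iff (hp : 0 < p) : wMorreyNorm p q x = 0 ↔ x = 0 := by
  refine ⟨fun h => ?_, fun h => h ▸ wMorreyNorm_zero hp⟩
  by_contra hx
  obtain ⟨k, hk⟩ := Function.ne_iff.mp hx
  set γ : ℝ≥0 := ‖x k‖₊ / 2
  have hγ : 0 < γ := by simpa [γ] using hk
  have hlt : γ < ‖x k‖₊ := NNReal.half_lt_self (nnnorm_ne_zero_iff.2 hk)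
  have hterm : (γ : ℝ≥0∞) ≤ wMorreyTerm p q x k 0 γ := by
    have hcard : (1 : ℝ≥0∞) ≤ (weakCard x k 0 γ : ℝ≥0∞) ^ (1 / p) :=
      ENNReal.one_le_rpow (by exact_mod_cast one_le_weakCard_of_lt hlt 0) (by positivity)
    calc (γ : ℝ≥0∞) = 1 * γ * 1 := by ring
      _ ≤ wMorreyTerm p q x k 0 γ := by
        rw [wMorreyTerm]
        gcongr
        simp
  have : (γ : ℝ≥0∞) ≤ 0 := h ▸ hterm.trans (wMorreyTerm_le_wMorreyNorm x k 0 hγ)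
  exact hγ.ne' (by simpa using this)

end

theorem stmt8_general (p q : ℝ) (hp : 1 ≤ p) :
    (∀ x y : ℤ → ℂ, wMorreyNorm p q x < ⊤ → wMorreyNorm p q y < ⊤ →
      wMorreyNorm p q (x + y) ≤ 2 * (wMorreyNorm p q x + wMorreyNorm p q y)) ∧
    (∀ (α : ℂ) (x : ℤ → ℂ), wMorreyNorm p q (α • x) = (‖α‖₊ : ℝ≥0∞) * wMorreyNorm p q x) ∧
    (∀ x : ℤ → ℂ, wMorreyNorm p q x = 0 ↔ x = 0) := by
  have hp0 : 0 < p := by linarith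
  exact ⟨fun _ _ _ _ => wMorreyNorm_add_le hp, wMorreyNorm_smul hp0,
    fun _ => wMorreyNorm_eq_zero_iff hp0⟩

theorem stmt8 (p q : ℝ) (hp : 1 ≤ p) (hpq : p ≤ q) :
    (∀ x y : ℤ → ℂ, wMorreyNorm p q x < ⊤ → wMorreyNorm p q y < ⊤ →
      wMorreyNorm p q (x + y) ≤ 2 * (wMorreyNorm p q x + wMorreyNorm p q y)) ∧
    (∀ (α : ℂ) (x : ℤ → ℂ), wMorreyNorm p q (α • x) = (‖α‖₊ : ℝ≥0∞) * wMorreyNorm p q x) ∧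
    (∀ x : ℤ → ℂ, wMorreyNorm p q x = 0 ↔ x = 0) :=
  stmt8_general p q hp
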